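/- Let x₁, ..., x_N ∈ ℝ² be non-collinear with consecutive points distinct, and let J be the radical-axis cost function for noise-free measurements dᵢ = ‖y* - xᵢ‖. Then J is strictly convex on ℝ², and y* is its unique global minimizer. -/

import Mathlib

/-!
Since `dᵢ = ‖y* - xᵢ‖`, the point `y*` lies on the radical axis of the circles around `xᵢ` and
`xᵢ₊₁`, i.e. `⟪y* - yᵢ, eᵢ⟫ = 0`; hence `J y = ½ Σ ⟪y - y*, eᵢ⟫²`. This is a positive multiple of
a quadratic form in `y - y*` that is positive definite, since a vector orthogonal to every `eᵢ`
would put all the `xᵢ` on one line. A positive definite quadratic form is strictly convex and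
vanishes only at its centre.
-/

open RealInnerProductSpace Finset Module

variable {E : Type*} [NormedAddCommGroup E] [InnerProductSpace ℝ E]

/-- The point where the radical axis of the circles `(p, r₁)` and `(q, r₂)` meets the line `pq`. -/
noncomputable def radicalAxisFoot (p q : E) (r₁ r₂ : ℝ) : E :=
  p + ((‖q - p‖ ^ 2 + r₁ ^ 2 - r₂ ^ 2) / (2 * ‖q - p‖) / ‖q - p‖) • (q - p)

theorem inner_sub_radicalAxisFoot_eq_zero (p q y : E) :
    ⟪y - radicalAxisFoot p q ‖y - p‖ ‖y - q‖, q - p⟫ = 0 := by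
  rcases eq_or_ne q p with rfl | hqp
  · simp
  have hv : ‖q - p‖ ≠ 0 := norm_ne_zero_iff.2 (sub_ne_zero.2 hqp)
  have hyq : ‖y - q‖ ^ 2 = ‖y - p‖ ^ 2 - 2 * ⟪y - p, q - p⟫ + ‖q - p‖ ^ 2 := by
    rw [← norm_sub_sq_real, sub_sub_sub_cancel_right]
  rw [radicalAxisFoot, hyq, sub_add_eq_sub_sub, inner_sub_left, real_inner_smul_left,
    inner_sub_left, real_inner_self_eq_norm_sq]
  field_simp
  ring

theorem collinear_of_forall_inner_sub_eq_zero (hE : finrank ℝ E = 2) {s : Set E} {w p : E}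
    (hw : w ≠ 0) (h : ∀ q ∈ s, ⟪w, q - p⟫ = 0) : Collinear ℝ s := by
  have : Fact (finrank ℝ E = 1 + 1) := ⟨hE⟩
  have : FiniteDimensional ℝ E := .of_fact_finrank_eq_succ 1
  have hspan : vectorSpan ℝ s ≤ (ℝ ∙ w)ᗮ := by
    refine Submodule.span_le.2 ?_
    rintro _ ⟨q, hq, r, hr, rfl⟩
    rw [SetLike.mem_coe, Submodule.mem_orthogonal_singleton_iff_inner_right]
    change ⟪w, q - r⟫ = 0
    rw [← sub_sub_sub_cancel_right q r p, inner_sub_right, h q hq, h r hr, sub_zero]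
  rw [collinear_iff_finrank_le_one]
  exact (Submodule.finrank_mono hspan).trans_eq (Submodule.finrank_orthogonal_span_singleton hw)

theorem exists_inner_succ_sub_ne_zero (hE : finrank ℝ E = 2) {x : ℕ → E} {N : ℕ}
    (hnc : ¬ Collinear ℝ (x '' Set.Iio N)) {w : E} (hw : w ≠ 0) :
    ∃ i ∈ range (N - 1), ⟪w, x (i + 1) - x i⟫ ≠ 0 := by
  by_contra! h
  refine hnc (collinear_of_forall_inner_sub_eq_zero hE hw (p := x 0) ?_)
  rintro _ ⟨j, hj, rfl⟩
  rw [← Finset.sum_range_sub, inner_sum]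
  exact Finset.sum_eq_zero fun i hi ↦ h i <| by
    simp only [Finset.mem_range, Set.mem_Iio] at hi hj ⊢; omega

section QuadraticForm

variable {ι : Type*} (s : Finset ι) (e : ι → E)

theorem sum_inner_sq_pos (hspan : ∀ w : E, w ≠ 0 → ∃ i ∈ s, ⟪w, e i⟫ ≠ 0) {w : E}
    (hw : w ≠ 0) : 0 < ∑ i ∈ s, ⟪w, e i⟫ ^ 2 := by
  obtain ⟨i, hi, hne⟩ := hspan w hw
  exact Finset.sum_pos' (fun _ _ ↦ sq_nonneg _) ⟨i, hi, by positivity⟩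

theorem sum_inner_sq_smul_add_smul_sub {c y z : E} {a b : ℝ} (hab : a + b = 1) :
    ∑ i ∈ s, ⟪a • y + b • z - c, e i⟫ ^ 2 + a * b * ∑ i ∈ s, ⟪y - z, e i⟫ ^ 2 =
      a * ∑ i ∈ s, ⟪y - c, e i⟫ ^ 2 + b * ∑ i ∈ s, ⟪z - c, e i⟫ ^ 2 := by
  simp only [Finset.mul_sum, ← Finset.sum_add_distrib]
  refine Finset.sum_congr rfl fun i _ ↦ ?_
  have hmid : a • y + b • z - c = a • (y - c) + b • (z - c) := by
    linear_combination (norm := module) hab • c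
  have hdiff : y - z = (y - c) - (z - c) := (sub_sub_sub_cancel_right y z c).symm
  rw [hmid, hdiff, inner_add_left, inner_sub_left, real_inner_smul_left, real_inner_smul_left]
  linear_combination (a * ⟪y - c, e i⟫ ^ 2 + b * ⟪z - c, e i⟫ ^ 2) * hab

theorem strictConvexOn_mul_sum_inner_sub_sq (hspan : ∀ w : E, w ≠ 0 → ∃ i ∈ s, ⟪w, e i⟫ ≠ 0)
    {κ : ℝ} (hκ : 0 < κ) (c : E) :
    StrictConvexOn ℝ Set.univ fun y ↦ κ * ∑ i ∈ s, ⟪y - c, e i⟫ ^ 2 := by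
  refine ⟨convex_univ, fun y _ z _ hyz a b ha hb hab ↦ ?_⟩
  have hgap := mul_pos (mul_pos (mul_pos hκ ha) hb) (sum_inner_sq_pos s e hspan (sub_ne_zero.2 hyz))
  have hmid := sum_inner_sq_smul_add_smul_sub s e (c := c) (y := y) (z := z) hab
  simp only [smul_eq_mul]
  linear_combination hgap + κ * hmid

end QuadraticForm

theorem cost_strictConvex_and_unique_minimizer_general (N : ℕ)
    (x : ℕ → EuclideanSpace ℝ (Fin 2))
    (hnc : ¬ Collinear ℝ (x '' Set.Iio N))
    (ystar : EuclideanSpace ℝ (Fin 2)) (d : ℕ → ℝ)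
    (hd : ∀ i, i < N → d i = ‖ystar - x i‖)
    (e : ℕ → EuclideanSpace ℝ (Fin 2)) (he : ∀ i, e i = x (i + 1) - x i)
    (a : ℕ → ℝ) (ha : ∀ i, a i = (‖e i‖ ^ 2 + (d i) ^ 2 - (d (i + 1)) ^ 2) / (2 * ‖e i‖))
    (Y : ℕ → EuclideanSpace ℝ (Fin 2)) (hY : ∀ i, Y i = x i + (a i / ‖e i‖) • e i)
    (J : EuclideanSpace ℝ (Fin 2) → ℝ)
    (hJ : ∀ y, J y = (1 / 2 : ℝ) * ∑ i ∈ Finset.range (N - 1), ⟪y - Y i, e i⟫ ^ 2) :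
    StrictConvexOn ℝ Set.univ J ∧ ∀ y, y ≠ ystar → J ystar < J y := by
  have hYfoot : ∀ i ∈ range (N - 1), ⟪ystar - Y i, e i⟫ = 0 := fun i hi ↦ by
    have hi : i + 1 < N := by rw [Finset.mem_range] at hi; omega
    rw [hY, ha, hd i (by omega), hd (i + 1) hi, he]
    exact inner_sub_radicalAxisFoot_eq_zero _ _ _
  have hJ' : J = fun y ↦ (1 / 2 : ℝ) * ∑ i ∈ range (N - 1), ⟪y - ystar, e i⟫ ^ 2 := by
    funext y
    rw [hJ]
    refine congrArg _ (Finset.sum_congr rfl fun i hi ↦ ?_)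
    rw [← sub_add_sub_cancel y ystar (Y i), inner_add_left, hYfoot i hi, add_zero]
  have hspan : ∀ w, w ≠ 0 → ∃ i ∈ range (N - 1), ⟪w, e i⟫ ≠ 0 := fun w hw ↦ by
    simpa only [he] using exists_inner_succ_sub_ne_zero finrank_euclideanSpace_fin hnc hw
  subst hJ'
  refine ⟨strictConvexOn_mul_sum_inner_sub_sq _ e hspan one_half_pos ystar, fun y hy ↦ ?_⟩
  simpa using sum_inner_sq_pos _ e hspan (sub_ne_zero.2 hy)

/-- For non-collinear sensors with consecutive positions distinct and noise-free measurements,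
the radical-axis cost `J` is strictly convex and `y*` is its unique global minimizer. -/
theorem cost_strictConvex_and_unique_minimizer (N : ℕ) (hN : 3 ≤ N)
    (x : ℕ → EuclideanSpace ℝ (Fin 2))
    (hnc : ¬ Collinear ℝ (x '' Set.Iio N))
    (hcons : ∀ i, i + 1 < N → x i ≠ x (i + 1))
    (ystar : EuclideanSpace ℝ (Fin 2)) (d : ℕ → ℝ)
    (hd : ∀ i, i < N → d i = ‖ystar - x i‖)
    (e : ℕ → EuclideanSpace ℝ (Fin 2)) (he : ∀ i, e i = x (i + 1) - x i)
    (a : ℕ → ℝ) (ha : ∀ i, a i = (‖e i‖ ^ 2 + (d i) ^ 2 - (d (i + 1)) ^ 2) / (2 * ‖e i‖))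
    (Y : ℕ → EuclideanSpace ℝ (Fin 2)) (hY : ∀ i, Y i = x i + (a i / ‖e i‖) • e i)
    (J : EuclideanSpace ℝ (Fin 2) → ℝ)
    (hJ : ∀ y, J y = (1 / 2 : ℝ) * ∑ i ∈ Finset.range (N - 1), ⟪y - Y i, e i⟫ ^ 2) :
    StrictConvexOn ℝ Set.univ J ∧ ∀ y, y ≠ ystar → J ystar < J y :=
  cost_strictConvex_and_unique_minimizer_general N x hnc ystar d hd e he a ha Y hY J hJ
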